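/- For r ≥ 1, the r-th factorial moment of the geometric distribution of order k equals μ_(r) = (r!/(q p^k)^{r+1}) · { q p^k - Σ_{m=2}^{r+1} (-1)^m p^{mk} q^{m-1} C((r+1-m)k + r - 1, m-2) - Σ_{m=2}^{r} (-1)^m p^{mk} q^m C((r+1-m)k + r - 1, m-1) }. -/

import Mathlib

/-!
Write `g n = P(N_k > n)` and encode a sequence `v` by the formal series `∑ₙ v n (1 + X) ^ n`,
whose `s`-th coefficient is the binomial moment `∑ₙ C(n, s) v n`. For the law of `N_k` this is
`A = E[(1 + X) ^ N_k]`, and `μ_(r) = r! [X^r] A`. Two renewal identities, `P(N_k = n + 1) =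
g n - g (n + 1)` and `P(N_k = n + k + 1) = q p^k g n` (no run among the first `n` trials, then a
failure, then `k` successes), give `A = 1 + X B` and `A = p^k (1 + X)^k + q p^k (1 + X)^(k+1) B`
for the series `B` of `g`. Hence `B = (1 - p^k (1 + X)^k) / (q p^k (1 + X)^(k+1) - X)`; expanding
`1 / (q p^k - X (1 + X)^(-(k+1)))` as a geometric series and reading off the coefficients of the
negative binomial series `(1 + X)^(-d)` yields the formula for `μ_(r) = r! [X^(r-1)] B`.
-/

open Finset

attribute [local instance] Classical.propDecidable

/-- `hasRunEnd k n ω m` : in the outcome string `ω` of `n` Bernoulli trials, a run of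
`k` consecutive successes ends at trial `m` (trials `m-k+1, ..., m` are successes). -/
def hasRunEnd (k n : ℕ) (ω : Fin n → Bool) (m : ℕ) : Prop :=
  k ≤ m ∧ m ≤ n ∧ ∀ j : Fin n, m - k ≤ (j : ℕ) → (j : ℕ) < m → ω j = true

/-- The first run of `k` consecutive successes is completed exactly at trial `n`. -/
def firstRun (k n : ℕ) (ω : Fin n → Bool) : Prop :=
  hasRunEnd k n ω n ∧ ∀ m < n, ¬ hasRunEnd k n ω m

/-- The pmf of the geometric distribution of order `k`:
`fk k p n = P(N_k = n)` where `N_k` is the waiting time for the first run of `k`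
consecutive successes in i.i.d. Bernoulli(`p`) trials; each outcome string contributes
`p^{#successes} (1-p)^{#failures}`. -/
noncomputable def fk (k : ℕ) (p : ℝ) (n : ℕ) : ℝ :=
  ∑ ω ∈ Finset.univ.filter (fun ω : Fin n → Bool => firstRun k n ω),
    p ^ (Finset.univ.filter (fun i => ω i = true)).card *
      (1 - p) ^ (Finset.univ.filter (fun i => ω i = false)).card

open PowerSeries

namespace PowerSeries

variable {R : Type*} [CommRing R]

theorem coeff_one_add_X_pow (m s : ℕ) : coeff s ((1 + X : R⟦X⟧) ^ m) = m.choose s := by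
  rw [← binomialSeries_nat (R := ℤ), binomialSeries_coeff, Ring.choose_natCast]
  simp

theorem coeff_binomialSeries_neg_succ (d n : ℕ) :
    coeff n (binomialSeries R (-((d + 1 : ℕ) : ℤ))) = (-1) ^ n * ((d + n).choose n : R) := by
  rw [← rescale_neg_one_invOneSubPow, coeff_rescale, invOneSubPow_val_succ_eq_mk_add_choose,
    coeff_mk, Nat.choose_symm_add]

theorem binomialSeries_pow (r : ℤ) (n : ℕ) :
    binomialSeries R r ^ n = binomialSeries R (n * r) := by
  induction n with
  | zero => simp
  | succ n ih =>
    rw [pow_succ, ih, ← binomialSeries_add]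
    push_cast
    ring_nf

/-- Truncated geometric series `(C a - Y)⁻¹ = ∑ Y ^ i / a ^ (i + 1)`: since `X ∣ Y`, only the
terms `i ≤ s` reach degree `s`. -/
theorem pow_mul_coeff_eq_of_mul_C_sub {B F Y : R⟦X⟧} {a : R} (hY : X ∣ Y)
    (h : B * (C a - Y) = F) (s : ℕ) :
    a ^ (s + 1) * coeff s B = ∑ i ∈ range (s + 1), a ^ i * coeff s (F * Y ^ (s - i)) := by
  have geom := (Commute.all (C a) Y).geom_sum₂_mul (s + 1)
  have key : B * C (a ^ (s + 1))
      = F * ∑ i ∈ range (s + 1), C (a ^ i) * Y ^ (s - i) + B * Y ^ (s + 1) := by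
    simp only [map_pow, Nat.add_sub_cancel] at geom ⊢
    rw [← h]
    linear_combination (-B) * geom
  have hvanish : coeff s (B * Y ^ (s + 1)) = 0 :=
    X_pow_dvd_iff.mp ((pow_dvd_pow_of_dvd hY _).mul_left _) s (Nat.lt_succ_self s)
  rw [mul_comm, ← coeff_mul_C, key, map_add, hvanish, add_zero, mul_sum, map_sum]
  refine sum_congr rfl fun i _ => ?_
  rw [mul_left_comm, coeff_C_mul]

theorem pow_mul_coeff_eq_of_mul_eq {B : R⟦X⟧} {a c : R} {k : ℕ}
    (h : B * (C c * (1 + X) ^ (k + 1) - X) = 1 - C a * (1 + X) ^ k) (s : ℕ) :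
    c ^ (s + 1) * coeff s B = ∑ i ∈ range (s + 1), (-1) ^ i * c ^ i *
      ((((k + 1) * (s - i) + k + i).choose i : R) - a * ((k + 1) * (s - i) + i).choose i) := by
  let W := binomialSeries R (-((k + 1 : ℕ) : ℤ))
  let V := binomialSeries R (-((0 + 1 : ℕ) : ℤ))
  have hW : (1 + X : R⟦X⟧) ^ (k + 1) * W = 1 := by
    rw [← binomialSeries_nat (R := ℤ), ← binomialSeries_add]
    simp
  have hV : (1 + X : R⟦X⟧) ^ k * W = V := by
    rw [← binomialSeries_nat (R := ℤ), ← binomialSeries_add]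
    push_cast
    ring_nf
    rfl
  have h' : B * (C c - X * W) = W - C a * V := by
    linear_combination W * h - B * C c * hW - C a * hV
  have hpow : ∀ d j : ℕ, binomialSeries R (-((d + 1 : ℕ) : ℤ)) * W ^ j
      = binomialSeries R (-(((k + 1) * j + d + 1 : ℕ) : ℤ)) := by
    intro d j
    rw [binomialSeries_pow, ← binomialSeries_add]
    push_cast
    ring_nf
  rw [pow_mul_coeff_eq_of_mul_C_sub (dvd_mul_right X W) h' s]
  refine sum_congr rfl fun i hi => ?_
  have hterm : (W - C a * V) * (X * W) ^ (s - i) = X ^ (s - i) *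
      (binomialSeries R (-(((k + 1) * (s - i) + k + 1 : ℕ) : ℤ))
        - C a * binomialSeries R (-(((k + 1) * (s - i) + 0 + 1 : ℕ) : ℤ))) := by
    rw [← hpow k (s - i), ← hpow 0 (s - i), mul_pow]
    ring
  rw [hterm, coeff_X_pow_mul', if_pos (Nat.sub_le s i),
    Nat.sub_sub_self (Nat.lt_succ_iff.mp (mem_range.mp hi)), map_sub, coeff_C_mul,
    coeff_binomialSeries_neg_succ, coeff_binomialSeries_neg_succ]
  ring

end PowerSeries

/-- The formal series `∑ₙ v n • (1 + X) ^ n`. -/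
noncomputable def binomialMoments (v : ℕ → ℝ) : ℝ⟦X⟧ :=
  mk fun s => ∑' n, (n.choose s : ℝ) * v n

theorem binomialMoments_const_mul (c : ℝ) (v : ℕ → ℝ) :
    binomialMoments (fun n => c * v n) = C c * binomialMoments v := by
  ext s
  simp only [binomialMoments, coeff_mk, coeff_C_mul, ← tsum_mul_left]
  exact tsum_congr fun n => by ring

theorem binomialMoments_sub {u v : ℕ → ℝ}
    (hu : ∀ s, Summable fun n => (n.choose s : ℝ) * u n)
    (hv : ∀ s, Summable fun n => (n.choose s : ℝ) * v n) :
    binomialMoments (fun n => u n - v n) = binomialMoments u - binomialMoments v := by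
  ext s
  simp only [binomialMoments, coeff_mk, map_sub, mul_sub]
  exact (hu s).tsum_sub (hv s)

theorem binomialMoments_eq_sum_add_shift {v : ℕ → ℝ} (m : ℕ)
    (hv : ∀ s, Summable fun n => (n.choose s : ℝ) * v (n + m)) :
    binomialMoments v = ∑ n ∈ range m, C (v n) * (1 + X) ^ n
      + (1 + X) ^ m * binomialMoments (fun n => v (n + m)) := by
  ext s
  have vandermonde : ∀ n, ((n + m).choose s : ℝ) * v (n + m)
      = ∑ ij ∈ antidiagonal s, (m.choose ij.1 : ℝ) * ((n.choose ij.2 : ℝ) * v (n + m)) := by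
    intro n
    rw [add_comm n m, Nat.add_choose_eq, Nat.cast_sum, sum_mul]
    exact sum_congr rfl fun ij _ => by push_cast; ring
  have hshift : Summable fun n => ((n + m).choose s : ℝ) * v (n + m) := by
    simp only [vandermonde]
    exact summable_sum fun ij _ => (hv ij.2).mul_left _
  have hsum : Summable fun n => (n.choose s : ℝ) * v n :=
    (summable_nat_add_iff (f := fun n => (n.choose s : ℝ) * v n) m).mp hshift
  rw [binomialMoments, coeff_mk, map_add, map_sum, coeff_mul]
  simp only [coeff_C_mul, coeff_one_add_X_pow, binomialMoments, coeff_mk]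
  rw [← hsum.sum_add_tsum_nat_add m, tsum_congr vandermonde, Summable.tsum_finsetSum]
  · congr 1
    · exact sum_congr rfl fun n _ => mul_comm _ _
    · exact sum_congr rfl fun ij _ => tsum_mul_left
  · exact fun ij _ => (hv ij.2).mul_left _

theorem summable_choose_mul_of_le_geometric {v : ℕ → ℝ} {K ρ : ℝ} (hv0 : ∀ n, 0 ≤ v n)
    (hv : ∀ n, v n ≤ K * ρ ^ n) (hρ0 : 0 ≤ ρ) (hρ1 : ρ < 1) (s : ℕ) :
    Summable fun n => (n.choose s : ℝ) * v n := by
  refine .of_nonneg_of_le (fun n => mul_nonneg (Nat.cast_nonneg _) (hv0 n)) (fun n => ?_)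
    ((summable_pow_mul_geometric_of_norm_lt_one s
      (by rwa [Real.norm_of_nonneg hρ0])).mul_left K)
  calc (n.choose s : ℝ) * v n ≤ (n : ℝ) ^ s * (K * ρ ^ n) :=
        mul_le_mul (mod_cast Nat.choose_le_pow n s) (hv n) (hv0 n) (by positivity)
    _ = K * ((n : ℝ) ^ s * ρ ^ n) := by ring

noncomputable def weight {n : ℕ} (p : ℝ) (ω : Fin n → Bool) : ℝ :=
  ∏ i, if ω i then p else 1 - p

def NoRun (k n : ℕ) (ω : Fin n → Bool) : Prop :=
  ∀ m, ¬ hasRunEnd k n ω m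

/-- `P(N_k > n)`. -/
noncomputable def survival (k : ℕ) (p : ℝ) (n : ℕ) : ℝ :=
  ∑ ω ∈ univ.filter (NoRun k n), weight p ω

theorem fk_eq_sum_weight (k : ℕ) (p : ℝ) (n : ℕ) :
    fk k p n = ∑ ω ∈ univ.filter (firstRun k n), weight p ω := by
  refine sum_congr rfl fun ω _ => ?_
  rw [weight, prod_ite, prod_const, prod_const]
  congr 3
  ext i
  simp

theorem weight_nonneg {n : ℕ} {p : ℝ} (hp0 : 0 ≤ p) (hp1 : p ≤ 1) (ω : Fin n → Bool) :
    0 ≤ weight p ω :=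
  prod_nonneg fun i _ => by split <;> linarith

theorem sum_weight_univ (p : ℝ) (n : ℕ) : ∑ ω : Fin n → Bool, weight p ω = 1 := by
  refine (Fintype.prod_sum fun (_ : Fin n) (b : Bool) => if b then p else 1 - p).symm.trans ?_
  simp

theorem sum_weight_filter_append {a b : ℕ} (p : ℝ) (P : (Fin a → Bool) → Prop)
    (Q : (Fin b → Bool) → Prop) [DecidablePred P] [DecidablePred Q] :
    ∑ ω ∈ univ.filter (fun ω : Fin (a + b) → Bool =>
        P (fun i => ω (Fin.castAdd b i)) ∧ Q (fun i => ω (Fin.natAdd a i))), weight p ω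
      = (∑ σ ∈ univ.filter P, weight p σ) * ∑ τ ∈ univ.filter Q, weight p τ := by
  rw [sum_filter, sum_filter, sum_filter, ← (Fin.appendEquiv a b).sum_comp,
    Fintype.sum_prod_type, sum_mul_sum]
  refine sum_congr rfl fun σ _ => sum_congr rfl fun τ _ => ?_
  have hweight : weight p (Fin.append σ τ) = weight p σ * weight p τ := by
    simp only [weight, Fin.prod_univ_add, Fin.append_left, Fin.append_right]
  simp only [Fin.appendEquiv, Equiv.coe_fn_mk, Fin.append_left, Fin.append_right, hweight]
  split_ifs <;> simp_all

theorem hasRunEnd_castAdd_iff {k a b m : ℕ} (hm : m ≤ a) (ω : Fin (a + b) → Bool) :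
    hasRunEnd k (a + b) ω m ↔ hasRunEnd k a (fun i => ω (Fin.castAdd b i)) m := by
  refine ⟨fun ⟨hkm, _, hrun⟩ => ⟨hkm, hm, fun j => hrun (Fin.castAdd b j)⟩,
    fun ⟨hkm, _, hrun⟩ => ⟨hkm, hm.trans (Nat.le_add_right a b), fun j hj1 hj2 => ?_⟩⟩
  simpa using hrun ⟨j, hj2.trans_le hm⟩ hj1 hj2

theorem noRun_of_lt {k n : ℕ} (hn : n < k) (ω : Fin n → Bool) : NoRun k n ω :=
  fun _ ⟨hkm, hmn, _⟩ => absurd (hkm.trans hmn) (Nat.not_le.mpr hn)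

theorem survival_of_lt {k n : ℕ} (p : ℝ) (hn : n < k) : survival k p n = 1 := by
  rw [survival, filter_true_of_mem fun ω _ => noRun_of_lt hn ω, sum_weight_univ]

theorem fk_of_lt {k n : ℕ} (p : ℝ) (hn : n < k) : fk k p n = 0 := by
  rw [fk_eq_sum_weight, filter_false_of_mem fun ω _ h => noRun_of_lt hn ω n h.1, sum_empty]

theorem fk_self (k : ℕ) (p : ℝ) : fk k p k = p ^ k := by
  have hrun : univ.filter (firstRun k k) = {fun _ => true} := by
    ext ω
    simp only [mem_filter, mem_univ, true_and, mem_singleton]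
    refine ⟨fun ⟨⟨_, _, hrun⟩, _⟩ => funext fun j => hrun j (by omega) j.isLt, ?_⟩
    rintro rfl
    exact ⟨⟨le_rfl, le_rfl, fun _ _ _ => rfl⟩, fun m hm h => absurd h.1 (by omega)⟩
  simp [fk_eq_sum_weight, hrun, weight]

theorem noRun_castAdd_one_iff {k n : ℕ} (ω : Fin (n + 1) → Bool) :
    NoRun k n (fun i => ω (Fin.castAdd 1 i)) ↔ NoRun k (n + 1) ω ∨ firstRun k (n + 1) ω := by
  have hprefix : NoRun k n (fun i => ω (Fin.castAdd 1 i)) ↔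
      ∀ m ≤ n, ¬ hasRunEnd k (n + 1) ω m :=
    ⟨fun h m hm hrun => h m ((hasRunEnd_castAdd_iff hm ω).mp hrun),
      fun h m hrun => h m hrun.2.1 ((hasRunEnd_castAdd_iff hrun.2.1 ω).mpr hrun)⟩
  rw [hprefix]
  constructor
  · intro h
    by_cases hlast : hasRunEnd k (n + 1) ω (n + 1)
    · exact Or.inr ⟨hlast, fun m hm => h m (by omega)⟩
    · refine Or.inl fun m hrun => ?_
      rcases Nat.lt_or_ge n m with hm | hm
      · exact hlast (by rwa [show m = n + 1 by have := hrun.2.1; omega] at hrun)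
      · exact h m hm hrun
  · rintro (h | h) m hm
    · exact h m
    · exact h.2 m (by omega)

theorem survival_eq_survival_succ_add_fk (k : ℕ) (p : ℝ) (n : ℕ) :
    survival k p n = survival k p (n + 1) + fk k p (n + 1) := by
  have hsplit := sum_weight_filter_append (a := n) (b := 1) p (NoRun k n) (fun _ => True)
  rw [filter_true, sum_weight_univ, mul_one] at hsplit
  simp only [and_true, noRun_castAdd_one_iff, filter_or] at hsplit
  rw [survival, ← hsplit, sum_union (disjoint_filter.mpr fun ω _ h1 h2 => h1 (n + 1) h2.1),
    fk_eq_sum_weight]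
  rfl

def failThenRun (k : ℕ) : Fin (k + 1) → Bool :=
  Fin.cons false fun _ => true

theorem weight_failThenRun (k : ℕ) (p : ℝ) : weight p (failThenRun k) = (1 - p) * p ^ k := by
  simp [weight, failThenRun, Fin.prod_univ_succ]

theorem natAdd_eq_failThenRun_iff {k n : ℕ} (ω : Fin (n + (k + 1)) → Bool) :
    (fun i => ω (Fin.natAdd n i)) = failThenRun k ↔
      ω ⟨n, by omega⟩ = false ∧ ∀ j : Fin (n + (k + 1)), n < j → ω j = true := by
  have hzero : Fin.natAdd n (0 : Fin (k + 1)) = ⟨n, by omega⟩ := rfl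
  constructor
  · intro h
    refine ⟨by simpa [failThenRun, hzero] using congrFun h 0, fun j hj => ?_⟩
    have hj' := congrFun h (Fin.succ ⟨j - n - 1, by omega⟩)
    rwa [show Fin.natAdd n (Fin.succ ⟨j - n - 1, by omega⟩) = j from Fin.ext (by simp; omega),
      failThenRun, Fin.cons_succ] at hj'
  · rintro ⟨h0, hrun⟩
    funext i
    refine Fin.cases ?_ (fun i => ?_) i
    · simpa [failThenRun, hzero] using h0
    · simpa [failThenRun] using hrun _ (by simp)

theorem firstRun_iff_noRun_and_failThenRun {k n : ℕ} (ω : Fin (n + (k + 1)) → Bool) :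
    firstRun k (n + (k + 1)) ω ↔
      NoRun k n (fun i => ω (Fin.castAdd (k + 1) i))
        ∧ (fun i => ω (Fin.natAdd n i)) = failThenRun k := by
  rw [natAdd_eq_failThenRun_iff]
  constructor
  · rintro ⟨⟨_, _, hrun⟩, hfirst⟩
    refine ⟨fun m hm => hfirst m (by have := hm.2.1; omega)
      ((hasRunEnd_castAdd_iff hm.2.1 ω).mpr hm), ?_, fun j hj => hrun j (by omega) j.isLt⟩
    -- a success at trial `n + 1` would complete a run one step earlier
    by_contra hn
    refine hfirst (n + k) (by omega) ⟨by omega, by omega, fun j hj1 hj2 => ?_⟩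
    rcases (show n = j ∨ n < j by omega) with hj | hj
    · rw [show j = ⟨n, by omega⟩ from Fin.ext hj.symm]
      simpa using hn
    · exact hrun j (by omega) j.isLt
  · rintro ⟨hnorun, hfail, hrun⟩
    refine ⟨⟨by omega, le_rfl, fun j hj _ => hrun j (by omega)⟩, fun m hm hmrun => ?_⟩
    rcases Nat.lt_or_ge n m with hnm | hmn
    · simp [hmrun.2.2 ⟨n, by omega⟩ (by simp; omega) hnm] at hfail
    · exact hnorun m ((hasRunEnd_castAdd_iff hmn ω).mp hmrun)

theorem fk_add_succ (k : ℕ) (p : ℝ) (n : ℕ) :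
    fk k p (n + (k + 1)) = survival k p n * ((1 - p) * p ^ k) := by
  have hpattern : ∑ τ ∈ univ.filter (· = failThenRun k), weight p τ = (1 - p) * p ^ k := by
    rw [filter_eq', if_pos (mem_univ _), sum_singleton, weight_failThenRun]
  rw [fk_eq_sum_weight, survival, ← hpattern, ← sum_weight_filter_append]
  congr 1
  ext ω
  simp only [mem_filter, mem_univ, true_and]
  exact firstRun_iff_noRun_and_failThenRun ω

section Decay

variable {k : ℕ} {p : ℝ}

theorem fk_nonneg (hp0 : 0 ≤ p) (hp1 : p ≤ 1) (n : ℕ) : 0 ≤ fk k p n := by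
  rw [fk_eq_sum_weight]
  exact sum_nonneg fun ω _ => weight_nonneg hp0 hp1 ω

theorem survival_nonneg (hp0 : 0 ≤ p) (hp1 : p ≤ 1) (n : ℕ) : 0 ≤ survival k p n :=
  sum_nonneg fun ω _ => weight_nonneg hp0 hp1 ω

theorem fk_succ_le_survival (hp0 : 0 ≤ p) (hp1 : p ≤ 1) (n : ℕ) :
    fk k p (n + 1) ≤ survival k p n := by
  linarith [survival_eq_survival_succ_add_fk k p n, survival_nonneg (k := k) hp0 hp1 (n + 1)]

theorem survival_antitone (hp0 : 0 ≤ p) (hp1 : p ≤ 1) : Antitone (survival k p) :=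
  antitone_nat_of_succ_le fun n => by
    linarith [survival_eq_survival_succ_add_fk k p n, fk_nonneg (k := k) hp0 hp1 (n + 1)]

theorem survival_add_le_pow (hk : 1 ≤ k) (hp0 : 0 ≤ p) (hp1 : p ≤ 1) (m : ℕ) :
    survival k p (m + k) ≤ (1 - (1 - p) * p ^ k) ^ m := by
  have hc0 : 0 ≤ (1 - p) * p ^ k := mul_nonneg (by linarith) (pow_nonneg hp0 k)
  have hc1 : (1 - p) * p ^ k ≤ 1 := by nlinarith [pow_le_one₀ hp0 hp1 (n := k)]
  induction m with
  | zero =>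
    simpa [survival_of_lt p (show 0 < k by omega)]
      using survival_antitone (k := k) hp0 hp1 (Nat.zero_le k)
  | succ m ih =>
    have hstep : survival k p (m + 1 + k)
        = survival k p (m + k) - survival k p m * ((1 - p) * p ^ k) := by
      rw [← fk_add_succ, survival_eq_survival_succ_add_fk k p (m + k)]
      ring_nf
    have hmono : survival k p (m + k) ≤ survival k p m := survival_antitone hp0 hp1 (by omega)
    rw [hstep, pow_succ]
    nlinarith [survival_nonneg (k := k) hp0 hp1 (m + k)]

theorem survival_le_geometric (hk : 1 ≤ k) (hp0 : 0 < p) (hp1 : p < 1) (n : ℕ) :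
    survival k p n ≤ ((1 - (1 - p) * p ^ k) ^ k)⁻¹ * (1 - (1 - p) * p ^ k) ^ n := by
  have hρ0 : 0 < 1 - (1 - p) * p ^ k := by nlinarith [pow_le_one₀ hp0.le hp1.le (n := k)]
  have hρ1 : 1 - (1 - p) * p ^ k ≤ 1 := by nlinarith [pow_pos hp0 k]
  rcases lt_or_ge n k with hn | hn
  · rw [survival_of_lt p hn, inv_mul_eq_div, one_le_div (pow_pos hρ0 k)]
    exact pow_le_pow_of_le_one hρ0.le hρ1 hn.le
  · obtain ⟨m, rfl⟩ := Nat.exists_eq_add_of_le' hn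
    rw [pow_add, mul_comm, mul_inv_cancel_right₀ (pow_pos hρ0 k).ne']
    exact survival_add_le_pow hk hp0.le hp1.le m

theorem summable_choose_mul_of_le_survival (hk : 1 ≤ k) (hp0 : 0 < p) (hp1 : p < 1)
    {v : ℕ → ℝ} (hv0 : ∀ n, 0 ≤ v n) (hv : ∀ n, v n ≤ survival k p n) (s : ℕ) :
    Summable fun n => (n.choose s : ℝ) * v n := by
  refine summable_choose_mul_of_le_geometric hv0
    (fun n => (hv n).trans (survival_le_geometric hk hp0 hp1 n)) ?_ ?_ s
  · nlinarith [pow_le_one₀ hp0.le hp1.le (n := k)]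
  · nlinarith [pow_pos hp0 k]

end Decay

section GeneratingFunction

variable {k : ℕ} {p : ℝ}

theorem binomialMoments_fk_eq_one_add_X_mul (hk : 1 ≤ k) (hp0 : 0 < p) (hp1 : p < 1) :
    binomialMoments (fk k p) = 1 + X * binomialMoments (survival k p) := by
  have hg0 : ∀ n, 0 ≤ survival k p n := survival_nonneg hp0.le hp1.le
  have hsurv_succ : ∀ s, Summable fun n => (n.choose s : ℝ) * survival k p (n + 1) :=
    summable_choose_mul_of_le_survival hk hp0 hp1 (fun n => hg0 (n + 1))
      fun n => survival_antitone hp0.le hp1.le (Nat.le_succ n)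
  have hfk := binomialMoments_eq_sum_add_shift 1 <| summable_choose_mul_of_le_survival hk hp0 hp1
    (fun n => fk_nonneg hp0.le hp1.le (n + 1)) (fk_succ_le_survival hp0.le hp1.le)
  have hsurv := binomialMoments_eq_sum_add_shift 1 hsurv_succ
  have hdiff : (fun n => fk k p (n + 1)) = fun n => survival k p n - survival k p (n + 1) :=
    funext fun n => by linarith [survival_eq_survival_succ_add_fk k p n]
  rw [hdiff, binomialMoments_sub
    (summable_choose_mul_of_le_survival hk hp0 hp1 hg0 fun _ => le_rfl) hsurv_succ] at hfk
  simp only [sum_range_one, fk_of_lt p (show 0 < k by omega),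
    survival_of_lt p (show 0 < k by omega), map_zero, map_one, pow_zero, pow_one, zero_mul,
    zero_add, one_mul] at hfk hsurv
  linear_combination hfk + hsurv

theorem binomialMoments_fk_eq_add_mul (hk : 1 ≤ k) (hp0 : 0 < p) (hp1 : p < 1) :
    binomialMoments (fk k p) = C (p ^ k) * (1 + X) ^ k
      + C ((1 - p) * p ^ k) * (1 + X) ^ (k + 1) * binomialMoments (survival k p) := by
  have hshift : (fun n => fk k p (n + (k + 1))) = fun n => (1 - p) * p ^ k * survival k p n :=
    funext fun n => by rw [fk_add_succ, mul_comm]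
  have hc1 : (1 - p) * p ^ k ≤ 1 := by
    nlinarith [pow_le_one₀ hp0.le hp1.le (n := k), pow_pos hp0 k]
  have hfk := binomialMoments_eq_sum_add_shift (v := fk k p) (k + 1) <| by
    simp only [fk_add_succ, mul_comm (survival k p _)]
    exact summable_choose_mul_of_le_survival hk hp0 hp1
      (fun n => mul_nonneg (by nlinarith [pow_pos hp0 k]) (survival_nonneg hp0.le hp1.le n))
      fun n => mul_le_of_le_one_left (survival_nonneg hp0.le hp1.le n) hc1
  rw [sum_range_succ, sum_eq_zero fun n hn => by rw [fk_of_lt p (mem_range.mp hn), map_zero,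
    zero_mul], fk_self, zero_add, hshift, binomialMoments_const_mul] at hfk
  rw [hfk]
  ring

theorem binomialMoments_survival_mul (hk : 1 ≤ k) (hp0 : 0 < p) (hp1 : p < 1) :
    binomialMoments (survival k p) * (C ((1 - p) * p ^ k) * (1 + X) ^ (k + 1) - X)
      = 1 - C (p ^ k) * (1 + X) ^ k := by
  linear_combination binomialMoments_fk_eq_one_add_X_mul hk hp0 hp1
    - binomialMoments_fk_eq_add_mul hk hp0 hp1

theorem tsum_descFactorial_mul_fk (hk : 1 ≤ k) (hp0 : 0 < p) (hp1 : p < 1) (s : ℕ) :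
    ∑' n : ℕ, (n.descFactorial (s + 1) : ℝ) * fk k p n
      = (s + 1).factorial * coeff s (binomialMoments (survival k p)) := by
  have hcoeff := congrArg (coeff (s + 1)) (binomialMoments_fk_eq_one_add_X_mul hk hp0 hp1)
  rw [binomialMoments, coeff_mk, map_add, coeff_one, if_neg s.succ_ne_zero, zero_add,
    coeff_succ_X_mul] at hcoeff
  simp_rw [Nat.descFactorial_eq_factorial_mul_choose, Nat.cast_mul, mul_assoc]
  rw [tsum_mul_left, hcoeff]

end GeneratingFunction

theorem sum_Icc_two_eq_sum_range {M : Type*} [AddCommMonoid M] (n : ℕ) (f : ℕ → M) :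
    ∑ m ∈ Icc 2 (n + 1), f m = ∑ i ∈ range n, f (i + 2) := by
  rw [← Ico_add_one_right_eq_Icc, sum_Ico_eq_sum_range, show n + 1 + 1 - 2 = n by omega]
  exact sum_congr rfl fun i _ => by rw [add_comm]

theorem sum_range_choose_eq_sum_Icc_choose {R : Type*} [CommRing R] (k s : ℕ) (p q : R) :
    q * p ^ k * ∑ i ∈ range (s + 1), (-1) ^ i * (q * p ^ k) ^ i *
        ((((k + 1) * (s - i) + k + i).choose i : R) - p ^ k * ((k + 1) * (s - i) + i).choose i)
      = q * p ^ k
        - ∑ m ∈ Icc 2 (s + 1 + 1), (-1 : R) ^ m * p ^ (m * k) * q ^ (m - 1) *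
            (((s + 1 + 1 - m) * k + (s + 1) - 1).choose (m - 2))
        - ∑ m ∈ Icc 2 (s + 1), (-1 : R) ^ m * p ^ (m * k) * q ^ m *
            (((s + 1 + 1 - m) * k + (s + 1) - 1).choose (m - 1)) := by
  set c := q * p ^ k
  have hsplit : c * ∑ i ∈ range (s + 1), (-1) ^ i * c ^ i *
        ((((k + 1) * (s - i) + k + i).choose i : R) - p ^ k * ((k + 1) * (s - i) + i).choose i)
      = ∑ i ∈ range (s + 1), (-1) ^ i * c ^ (i + 1) * (((k + 1) * (s - i) + k + i).choose i : R)
        - p ^ k * ∑ i ∈ range (s + 1),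
            (-1) ^ i * c ^ (i + 1) * ((k + 1) * (s - i) + i).choose i := by
    rw [mul_sum, mul_sum, ← sum_sub_distrib]
    exact sum_congr rfl fun i _ => by ring
  have hfirst : ∑ i ∈ range (s + 1),
        (-1) ^ i * c ^ (i + 1) * (((k + 1) * (s - i) + k + i).choose i : R)
      = c - ∑ i ∈ range s, (-1 : R) ^ (i + 2) * p ^ ((i + 2) * k) * q ^ (i + 2) *
          (((s + 1 + 1 - (i + 2)) * k + (s + 1) - 1).choose (i + 2 - 1)) := by
    rw [sum_range_succ', add_comm, sub_eq_add_neg, ← sum_neg_distrib]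
    congr 1
    · simp
    · refine sum_congr rfl fun i hi => ?_
      obtain ⟨j, rfl⟩ := Nat.exists_eq_add_of_lt (mem_range.mp hi)
      rw [show i + j + 1 + 1 + 1 - (i + 2) = j + 1 by omega, show i + 2 - 1 = i + 1 by omega,
        show (k + 1) * (i + j + 1 - (i + 1)) + k + (i + 1) = (j + 1) * k + (i + j + 1 + 1) - 1 by
          rw [show i + j + 1 - (i + 1) = j by omega]; ring_nf; omega]
      ring
  have hS1 : ∑ i ∈ range (s + 1), (-1 : R) ^ (i + 2) * p ^ ((i + 2) * k) * q ^ (i + 2 - 1) *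
        (((s + 1 + 1 - (i + 2)) * k + (s + 1) - 1).choose (i + 2 - 2))
      = p ^ k * ∑ i ∈ range (s + 1),
          (-1) ^ i * c ^ (i + 1) * ((k + 1) * (s - i) + i).choose i := by
    rw [mul_sum]
    refine sum_congr rfl fun i hi => ?_
    obtain ⟨j, rfl⟩ := Nat.exists_eq_add_of_le (Nat.lt_succ_iff.mp (mem_range.mp hi))
    rw [show i + j + 1 + 1 - (i + 2) = j by omega, Nat.add_sub_cancel_left,
      show i + 2 - 1 = i + 1 by omega, Nat.add_sub_cancel,
      show j * k + (i + j + 1) - 1 = (k + 1) * j + i by ring_nf; omega]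
    ring
  rw [sum_Icc_two_eq_sum_range, sum_Icc_two_eq_sum_range, hsplit, hfirst, hS1]
  ring

/-- Explicit combinatorial formula for the `r`-th factorial moment. -/
theorem factorial_moment_formula (k : ℕ) (hk : 1 ≤ k) (p q : ℝ) (hp0 : 0 < p) (hp1 : p < 1)
    (hq : q = 1 - p) (r : ℕ) (hr : 1 ≤ r) :
    ∑' n : ℕ, (n.descFactorial r : ℝ) * fk k p n
      = (r.factorial : ℝ) / (q * p ^ k) ^ (r + 1) *
          (q * p ^ k
            - ∑ m ∈ Finset.Icc 2 (r + 1),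
                (-1 : ℝ) ^ m * p ^ (m * k) * q ^ (m - 1) *
                  (((r + 1 - m) * k + r - 1).choose (m - 2))
            - ∑ m ∈ Finset.Icc 2 r,
                (-1 : ℝ) ^ m * p ^ (m * k) * q ^ m *
                  (((r + 1 - m) * k + r - 1).choose (m - 1))) := by
  subst hq
  obtain ⟨s, rfl⟩ : ∃ s, r = s + 1 := ⟨r - 1, by omega⟩
  have hc : (1 - p) * p ^ k ≠ 0 := mul_ne_zero (by linarith) (pow_ne_zero k hp0.ne')
  rw [tsum_descFactorial_mul_fk hk hp0 hp1, ← sum_range_choose_eq_sum_Icc_choose,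
    ← pow_mul_coeff_eq_of_mul_eq (binomialMoments_survival_mul hk hp0 hp1) s]
  field_simp
  ring
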